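/- Let M be a binary matroid that has an internally 4-connected minor N satisfying |E(N)| ≥ 8. If (s_1, s_2, s_3, s_4) is a 4-fan of M, then M\s_1 or M/s_4 has an N-minor. If (s_1, s_2, s_3, s_4, s_5) is a 5-fan of M, then either M\s_1\s_5 has an N-minor, or both M\s_1/s_2 and M/s_4\s_5 have N-minors; in particular, both M\s_1 and M\s_5 have N-minors. -/

import Mathlib

/-!
Write an `N`-minor of `M` as `M ／ C ＼ D` with `C`, `D` disjoint. As `N` is 3-connected with at
least four elements, a minor isomorphic to it has no dependent or codependent set of size at most
two. Hence if `{y, z}` is a parallel pair of `M`, one of `y, z` lies in `D` or can be moved there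
from `C`, and since swapping `y` and `z` is an automorphism of `M`, both `M ＼ y` and `M ＼ z`
have `N`-minors; dually for series pairs. Contracting an element of a triangle leaves a parallel
pair and deleting an element of a triad leaves a series pair, so `N`-minors of `M ／ x` and
`M ＼ x` propagate along a fan. Tracing where the fan elements go in `C` and `D` settles every
case except the one where the minor keeps a triangle and a triad spanning four elements; such a
4-element set is dependent and codependent, hence 3-separating, which internal 4-connectivity
with at least eight elements forbids.
-/

open scoped Matroid

universe u v

namespace Matroid

variable {α : Type u} {β : Type v}

/-- Deletion of a set of elements from a matroid. -/
def Del (M : Matroid α) (D : Set α) : Matroid α := M ↾ (M.E \ D)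

/-- Contraction of a set of elements in a matroid. -/
def Con (M : Matroid α) (C : Set α) : Matroid α := (M✶.Del C)✶

/-- A circuit is a minimal dependent set. -/
def IsCircuit' (M : Matroid α) (C : Set α) : Prop :=
  M.Dep C ∧ ∀ ⦃D : Set α⦄, D ⊂ C → M.Indep D

/-- A cocircuit is a circuit of the dual matroid. -/
def IsCocircuit' (M : Matroid α) (C : Set α) : Prop := M✶.IsCircuit' C

/-- A triangle is a 3-element circuit. -/
def IsTriangle (M : Matroid α) (T : Set α) : Prop := M.IsCircuit' T ∧ T.encard = 3

/-- A triad is a 3-element cocircuit. -/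
def IsTriad (M : Matroid α) (T : Set α) : Prop := M.IsCocircuit' T ∧ T.encard = 3

/-- A quad is a 4-element set that is both a circuit and a cocircuit. -/
def IsQuad (M : Matroid α) (Q : Set α) : Prop :=
  M.IsCircuit' Q ∧ M.IsCocircuit' Q ∧ Q.encard = 4

/-- The rank (in `ℕ∞`) of a set in a matroid: the supremum of the cardinalities
of independent subsets of the set. -/
noncomputable def eRk' (M : Matroid α) (X : Set α) : ℕ∞ :=
  ⨆ I ∈ {I : Set α | M.Indep I ∧ I ⊆ X}, I.encard

/-- `M.ConnBddBy X k` says that the connectivity `λ_M(X) = r(X) + r(E − X) − r(M)`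
is at most `k`, phrased without subtraction. -/
def ConnBddBy (M : Matroid α) (X : Set α) (k : ℕ) : Prop :=
  M.eRk' X + M.eRk' (M.E \ X) ≤ M.eRk' M.E + (k : ℕ∞)

/-- `(X, Y)` is a `k`-separation of `M`: a partition of the ground set with both
sides of size at least `k` and `λ_M(X) ≤ k − 1`. -/
def IsKSep (M : Matroid α) (k : ℕ) (X Y : Set α) : Prop :=
  Disjoint X Y ∧ X ∪ Y = M.E ∧ (k : ℕ∞) ≤ X.encard ∧ (k : ℕ∞) ≤ Y.encard ∧
    M.ConnBddBy X (k - 1)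

/-- A matroid is `n`-connected if it has no `k`-separation for any `k < n`. -/
def NConnected (M : Matroid α) (n : ℕ) : Prop :=
  ∀ k : ℕ, 0 < k → k < n → ∀ X Y : Set α, ¬ M.IsKSep k X Y

/-- A matroid is 3-connected if it has no 1- or 2-separation. -/
def ThreeConnected (M : Matroid α) : Prop := M.NConnected 3

/-- A matroid is 4-connected if it has no 1-, 2- or 3-separation. -/
def FourConnected (M : Matroid α) : Prop := M.NConnected 4

/-- A matroid is `(4, k)`-connected if it is 3-connected and every 3-separation
has a side with at most `k` elements. -/
def FourKConnected (M : Matroid α) (k : ℕ) : Prop :=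
  M.ThreeConnected ∧ ∀ X Y : Set α, M.IsKSep 3 X Y →
    X.encard ≤ (k : ℕ∞) ∨ Y.encard ≤ (k : ℕ∞)

/-- A matroid is internally 4-connected if it is (4, 3)-connected. -/
def InternallyFourConnected (M : Matroid α) : Prop := M.FourKConnected 3

/-- A `(4, 3)`-violator is a 3-separation with both sides of size at least 4. -/
def Violator43 (M : Matroid α) (X Y : Set α) : Prop :=
  M.IsKSep 3 X Y ∧ (4 : ℕ∞) ≤ X.encard ∧ (4 : ℕ∞) ≤ Y.encard

/-- Two matroids are isomorphic if there is a bijection between their ground sets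
carrying independent sets to independent sets in both directions. -/
def IsIsoTo (M : Matroid α) (N : Matroid β) : Prop :=
  ∃ e : M.E ≃ N.E, ∀ I : Set M.E,
    M.Indep (Subtype.val '' I) ↔ N.Indep (Subtype.val '' (e '' I))

/-- `N` is a minor of `M` if it is obtained from `M` by contracting a set and
deleting a disjoint set. -/
def IsMinorOf (N M : Matroid α) : Prop :=
  ∃ C D : Set α, Disjoint C D ∧ C ⊆ M.E ∧ D ⊆ M.E ∧ N = (M.Con C).Del D

/-- `M` has an `N`-minor: a minor of `M` isomorphic to `N`. -/
def HasIsoMinor (M : Matroid α) (N : Matroid β) : Prop :=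
  ∃ M₀ : Matroid α, M₀.IsMinorOf M ∧ M₀.IsIsoTo N

/-- `M` has a proper `N`-minor: a proper minor of `M` isomorphic to `N`. -/
def HasProperIsoMinor (M : Matroid α) (N : Matroid β) : Prop :=
  ∃ M₀ : Matroid α, M₀.IsMinorOf M ∧ M₀ ≠ M ∧ M₀.IsIsoTo N

/-- A matroid is binary if it is representable over `GF(2)`. -/
def IsBinary (M : Matroid α) : Prop :=
  ∃ (ι : Type u) (v : α → ι → ZMod 2), ∀ I : Set α,
    M.Indep I ↔ I ⊆ M.E ∧ LinearIndependent (ZMod 2) (fun x : I => v x)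

/-- A 4-fan: an ordering `(a, b, c, d)` of a 4-element set with `{a,b,c}` a
triangle and `{b,c,d}` a triad. -/
def Is4FanOrdering (M : Matroid α) (a b c d : α) : Prop :=
  ({a, b, c, d} : Set α).encard = 4 ∧
    M.IsTriangle {a, b, c} ∧ M.IsTriad {b, c, d}

/-- A 5-fan: an ordering of a 5-element set whose alternating sequence contains
two triangles. -/
def Is5FanOrdering (M : Matroid α) (a b c d e : α) : Prop :=
  ({a, b, c, d, e} : Set α).encard = 5 ∧
    M.IsTriangle {a, b, c} ∧ M.IsTriad {b, c, d} ∧ M.IsTriangle {c, d, e}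

/-- A 5-cofan: an ordering of a 5-element set whose alternating sequence contains
two triads. -/
def Is5CofanOrdering (M : Matroid α) (a b c d e : α) : Prop :=
  ({a, b, c, d, e} : Set α).encard = 5 ∧
    M.IsTriad {a, b, c} ∧ M.IsTriangle {b, c, d} ∧ M.IsTriad {c, d, e}

/-- A fan ordering `(s 0, …, s (n-1))`: the consecutive triples form an
alternating sequence of triangles and triads. -/
def IsFanOrdering (M : Matroid α) (n : ℕ) (s : ℕ → α) : Prop :=
  3 ≤ n ∧ Set.InjOn s (Set.Iio n) ∧
    ((∀ i : ℕ, i + 3 ≤ n →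
        (Even i → M.IsTriangle {s i, s (i + 1), s (i + 2)}) ∧
        (¬ Even i → M.IsTriad {s i, s (i + 1), s (i + 2)})) ∨
     (∀ i : ℕ, i + 3 ≤ n →
        (Even i → M.IsTriad {s i, s (i + 1), s (i + 2)}) ∧
        (¬ Even i → M.IsTriangle {s i, s (i + 1), s (i + 2)})))

/-- The counterexample hypotheses on a pair `(M, N)`. -/
def CexHyp (M : Matroid α) (N : Matroid β) : Prop :=
  M.IsBinary ∧ N.IsBinary ∧
  M.InternallyFourConnected ∧ N.InternallyFourConnected ∧
  M.HasProperIsoMinor N ∧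
  (8 : ℕ∞) ≤ N.E.encard ∧ (11 : ℕ∞) ≤ M.E.encard ∧
  (∀ T : Set α, M.IsTriangle T → ∀ e ∈ T, ¬ (M.Del {e}).HasIsoMinor N) ∧
  (∀ T : Set α, M.IsTriad T → ∀ e ∈ T, ¬ (M.Con {e}).HasIsoMinor N) ∧
  ¬ ∃ M' : Matroid α, M'.IsMinorOf M ∧ M'.InternallyFourConnected ∧
      M'.HasIsoMinor N ∧
      M'.E.encard + 1 ≤ M.E.encard ∧ M.E.encard ≤ M'.E.encard + 2

end Matroid

theorem List.encard_toFinset_eq_length_iff {α : Type*} [DecidableEq α] {l : List α} :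
    (l.toFinset : Set α).encard = l.length ↔ l.Nodup := by
  rw [Set.encard_coe_eq_coe_finsetCard, Nat.cast_inj]
  exact Multiset.toFinset_card_eq_card_iff_nodup

theorem Set.eq_pair_of_encard_eq_two {α : Type*} {s : Set α} {x y : α} (hs : s.encard = 2)
    (hx : x ∈ s) (hy : y ∈ s) (hxy : x ≠ y) : s = {x, y} :=
  ((Set.finite_of_encard_eq_coe (k := 2) hs).eq_of_subset_of_encard_le' (Set.pair_subset hx hy)
    (by rw [hs, Set.encard_pair hxy])).symm

theorem Set.encard_sdiff_singleton_eq_two {α : Type*} {s : Set α} {x : α} (hs : s.encard = 3)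
    (hx : x ∈ s) : (s \ {x}).encard = 2 := by
  rw [Set.encard_sdiff_singleton_of_mem hx, hs]
  rfl

theorem Equiv.image_swap_eq_self {α : Type*} [DecidableEq α] {s : Set α} {b c : α}
    (h : b ∈ s ↔ c ∈ s) : Equiv.swap b c '' s = s := by
  ext x
  rw [Equiv.image_eq_preimage_symm, Equiv.symm_swap, Set.mem_preimage, Equiv.swap_apply_def]
  split_ifs with hb hc
  · subst hb; exact h.symm
  · subst hc; exact h
  · rfl

namespace Matroid

variable {α : Type u} {β : Type v} {γ : Type*}

section Minors

variable {M M₀ : Matroid α} {N : Matroid β} {C D : Set α} {x : α}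

@[simp] lemma del_eq_delete (M : Matroid α) (D : Set α) : M.Del D = M ＼ D := rfl

@[simp] lemma con_eq_contract (M : Matroid α) (C : Set α) : M.Con C = M ／ C := rfl

lemma isCircuit'_iff : M.IsCircuit' C ↔ M.IsCircuit C :=
  isCircuit_iff_forall_ssubset.symm

lemma IsTriangle.isCircuit (h : M.IsTriangle C) : M.IsCircuit C :=
  isCircuit'_iff.1 h.1

lemma IsTriad.isCocircuit (h : M.IsTriad C) : M.IsCocircuit C :=
  isCircuit'_iff.1 h.1

lemma isMinorOf_iff_isMinor : M₀.IsMinorOf M ↔ M₀ ≤m M := by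
  refine ⟨fun ⟨C, D, _, _, _, h⟩ => ⟨C, D, h⟩, fun h => ?_⟩
  obtain ⟨C, D, hC, hD, hCD, rfl⟩ := h.exists_eq_contract_delete_disjoint
  exact ⟨C, D, hCD, hC, hD, rfl⟩

lemma hasIsoMinor_iff : M.HasIsoMinor N ↔ ∃ M₀, M₀ ≤m M ∧ M₀.IsIsoTo N := by
  simp only [HasIsoMinor, isMinorOf_iff_isMinor]

lemma HasIsoMinor.of_isMinor (h : M₀.HasIsoMinor N) (hM₀ : M₀ ≤m M) : M.HasIsoMinor N := by
  obtain ⟨M₁, hM₁, hiso⟩ := hasIsoMinor_iff.1 h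
  exact hasIsoMinor_iff.2 ⟨M₁, hM₁.trans hM₀, hiso⟩

lemma IsIsoTo.hasIsoMinor (h : M.IsIsoTo N) : M.HasIsoMinor N :=
  hasIsoMinor_iff.2 ⟨M, IsMinor.refl, h⟩

lemma delete_isMinor (M : Matroid α) (D : Set α) : M ＼ D ≤m M :=
  ⟨∅, D, by rw [contract_empty]⟩

lemma contract_isMinor (M : Matroid α) (C : Set α) : M ／ C ≤m M :=
  ⟨C, ∅, by rw [delete_empty]⟩

lemma IsMinor.dual (h : M₀ ≤m M) : M₀✶ ≤m M✶ := by
  obtain ⟨C, D, rfl⟩ := h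
  exact ⟨D \ C, C, by rw [dual_contract_delete, delete_contract_comm']⟩

lemma contract_delete_isMinor_delete {D' : Set α} (hCD : Disjoint C D) (hD' : D' ⊆ D) :
    M ／ C ＼ D ≤m M ＼ D' :=
  ⟨C, D, by rw [← contract_delete_comm _ (hCD.mono_right hD'), delete_delete,
    Set.union_eq_self_of_subset_left hD']⟩

lemma contract_delete_isMinor_contract (hx : x ∈ C) : M ／ C ＼ D ≤m M ／ {x} :=
  ⟨C, D, by rw [contract_contract, Set.singleton_union, Set.insert_eq_of_mem hx]⟩

/-- `x` is a loop of `M ／ (C \ {x})`, so contracting it there is the same as deleting it. -/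
lemma contract_delete_isMinor_delete_of_mem_closure (hx : x ∈ C)
    (hxC : x ∈ M.closure (C \ {x})) : M ／ C ＼ D ≤m M ＼ {x} := by
  have hloop : (M ／ (C \ {x})).IsLoop x :=
    contract_isLoop_iff_mem_closure.2 ⟨hxC, fun h => h.2 rfl⟩
  have hC : M ／ C = M ＼ {x} ／ (C \ {x}) := by
    conv_lhs => rw [← Set.sdiff_union_of_subset (Set.singleton_subset_iff.2 hx),
      ← contract_contract, contract_eq_delete_of_subset_loops (Set.singleton_subset_iff.2 hloop),
      contract_delete_comm _ Set.disjoint_sdiff_left]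
  rw [hC]
  exact contract_delete_isMinor _ _ _

lemma mem_or_mem_or_mem_contract_delete_ground (C D : Set α) (hx : x ∈ M.E) :
    x ∈ C ∨ x ∈ D ∨ x ∈ (M ／ C ＼ D).E := by
  simp only [delete_ground, contract_ground, Set.mem_sdiff]
  tauto

lemma IsIsoTo.hasIsoMinor_contract_of_mem (h : (M ／ C ＼ D).IsIsoTo N) (hx : x ∈ C) :
    (M ／ {x}).HasIsoMinor N :=
  h.hasIsoMinor.of_isMinor (contract_delete_isMinor_contract hx)

lemma IsIsoTo.hasIsoMinor_delete_of_mem (h : (M ／ C ＼ D).IsIsoTo N) (hCD : Disjoint C D)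
    (hx : x ∈ D) : (M ＼ {x}).HasIsoMinor N :=
  h.hasIsoMinor.of_isMinor (contract_delete_isMinor_delete hCD (Set.singleton_subset_iff.2 hx))

end Minors

section Isomorphism

variable {M M₀ : Matroid α} {N : Matroid β}

lemma IsIsoTo.symm (h : M.IsIsoTo N) : N.IsIsoTo M := by
  obtain ⟨e, he⟩ := h
  refine ⟨e.symm, fun I => ?_⟩
  rw [he, Equiv.image_symm_image]

lemma IsIsoTo.trans {P : Matroid γ} (h₁ : M.IsIsoTo N) (h₂ : N.IsIsoTo P) : M.IsIsoTo P := by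
  obtain ⟨e₁, he₁⟩ := h₁
  obtain ⟨e₂, he₂⟩ := h₂
  refine ⟨e₁.trans e₂, fun I => ?_⟩
  rw [he₁, he₂, Equiv.coe_trans, Set.image_comp]

lemma isIsoTo_mapEquiv (M : Matroid α) (σ : α ≃ β) : M.IsIsoTo (M.mapEquiv σ) := by
  let e : M.E ≃ (M.mapEquiv σ).E := (σ.image M.E).trans (Equiv.setCongr (by simp))
  refine ⟨e, fun I => ?_⟩
  have himage : Subtype.val '' (e '' I) = σ '' (Subtype.val '' I) := by
    rw [Set.image_image, Set.image_image]
    rfl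
  rw [himage, mapEquiv_indep_iff, Equiv.symm_image_image]

lemma IsIsoTo.exists_eq_map (h : M.IsIsoTo N) (hN : N.E.Nonempty) :
    ∃ (f : α → β) (hf : Set.InjOn f M.E), N = M.map f hf := by
  classical
  obtain ⟨e, he⟩ := h
  obtain ⟨y₀, -⟩ := hN
  let f : α → β := fun x => if hx : x ∈ M.E then e ⟨x, hx⟩ else y₀
  have hf_eq : ∀ x (hx : x ∈ M.E), f x = e ⟨x, hx⟩ := fun x hx => dif_pos hx
  have hf : Set.InjOn f M.E := fun x hx y hy hxy => by
    rw [hf_eq x hx, hf_eq y hy] at hxy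
    exact congrArg Subtype.val (e.injective (Subtype.val_injective hxy))
  have himage : ∀ S : Set M.E, f '' (Subtype.val '' S) = Subtype.val '' (e '' S) := fun S => by
    rw [Set.image_image, Set.image_image]
    exact Set.image_congr fun a _ => hf_eq a a.2
  refine ⟨f, hf, ext_indep ?_ fun J hJ => ?_⟩
  · rw [map_ground, ← Subtype.coe_image_univ M.E, himage,
      Set.image_univ_of_surjective e.surjective, Subtype.coe_image_univ]
  · obtain ⟨S, rfl⟩ : ∃ S : Set M.E, Subtype.val '' (e '' S) = J :=
      ⟨e.symm '' (Subtype.val ⁻¹' J), by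
        rw [Equiv.image_symm_image, Subtype.image_preimage_coe, Set.inter_eq_right.2 hJ]⟩
    rw [← he, ← himage, map_image_indep_iff (Subtype.coe_image_subset _ _)]

lemma mapEquiv_delete (M : Matroid α) (σ : α ≃ β) (D : Set α) :
    (M ＼ D).mapEquiv σ = M.mapEquiv σ ＼ σ '' D := by
  refine ext_indep (by simp [Set.image_sdiff σ.injective]) fun I _ => ?_
  rw [mapEquiv_indep_iff, delete_indep_iff, delete_indep_iff, mapEquiv_indep_iff,
    ← Set.disjoint_image_iff σ.injective, Equiv.image_symm_image]

lemma mapEquiv_dual (M : Matroid α) (σ : α ≃ β) : M✶.mapEquiv σ = (M.mapEquiv σ)✶ := by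
  rw [mapEquiv_eq_map, mapEquiv_eq_map, map_dual]

lemma mapEquiv_contract (M : Matroid α) (σ : α ≃ β) (C : Set α) :
    (M ／ C).mapEquiv σ = M.mapEquiv σ ／ σ '' C := by
  rw [← dual_delete_dual, mapEquiv_dual, mapEquiv_delete, mapEquiv_dual, dual_delete_dual]

lemma IsMinor.mapEquiv (h : M₀ ≤m M) (σ : α ≃ β) : M₀.mapEquiv σ ≤m M.mapEquiv σ := by
  obtain ⟨C, D, rfl⟩ := h
  exact ⟨σ '' C, σ '' D, by rw [mapEquiv_delete, mapEquiv_contract]⟩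

lemma HasIsoMinor.mapEquiv (h : M.HasIsoMinor N) (σ : α ≃ γ) :
    (M.mapEquiv σ).HasIsoMinor N := by
  obtain ⟨M₀, hM₀, hiso⟩ := hasIsoMinor_iff.1 h
  exact hasIsoMinor_iff.2 ⟨_, hM₀.mapEquiv σ, (isIsoTo_mapEquiv M₀ σ).symm.trans hiso⟩

end Isomorphism

section ParallelSwap

variable {M : Matroid α} {N : Matroid β} {I : Set α} {b c : α}

lemma IsCircuit.indep_insert_sdiff_of_pair (h : M.IsCircuit {b, c}) (hI : M.Indep I)
    (hcI : c ∈ I) (hbI : b ∉ I) : M.Indep (insert b I \ {c}) := by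
  have hbc : b ≠ c := fun hbc => hbI (hbc ▸ hcI)
  have hc : c ∈ M.closure {b} := by
    simpa [Set.pair_sdiff_right hbc] using
      h.mem_closure_sdiff_singleton_of_mem (Set.mem_insert_of_mem b rfl)
  rw [(hI.subset Set.sdiff_subset).insert_sdiff_indep_iff hcI]
  refine .inl ⟨h.subset_ground (Set.mem_insert b {c}), fun hbcl => ?_⟩
  exact hI.notMem_closure_sdiff_of_mem hcI
    (M.closure_subset_closure_of_subset_closure (Set.singleton_subset_iff.2 hbcl) hc)

lemma IsCircuit.indep_image_swap [DecidableEq α] (h : M.IsCircuit {b, c}) (hI : M.Indep I) :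
    M.Indep (Equiv.swap b c '' I) := by
  by_cases hbI : b ∈ I <;> by_cases hcI : c ∈ I
  · exact absurd (hI.subset (Set.pair_subset hbI hcI)) h.dep.not_indep
  · rw [Equiv.image_swap_of_mem_of_notMem hbI hcI]
    exact (Set.pair_comm b c ▸ h).indep_insert_sdiff_of_pair hI hbI hcI
  · rw [Equiv.swap_comm, Equiv.image_swap_of_mem_of_notMem hcI hbI]
    exact h.indep_insert_sdiff_of_pair hI hcI hbI
  · rwa [Equiv.image_swap_eq_self (iff_of_false hbI hcI)]

lemma IsCircuit.mapEquiv_swap_eq_self [DecidableEq α] (h : M.IsCircuit {b, c}) :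
    M.mapEquiv (Equiv.swap b c) = M := by
  refine ext_indep ?_ fun I _ => ⟨fun hI => ?_, fun hI => ?_⟩
  · rw [mapEquiv_ground_eq, Equiv.image_swap_eq_self (iff_of_true
      (h.subset_ground (Set.mem_insert b {c})) (h.subset_ground (Set.mem_insert_of_mem b rfl)))]
  · rw [mapEquiv_indep_iff, Equiv.symm_swap] at hI
    simpa [← Set.image_comp] using h.indep_image_swap hI
  · rw [mapEquiv_indep_iff, Equiv.symm_swap]
    exact h.indep_image_swap hI

lemma IsCocircuit.mapEquiv_swap_eq_self [DecidableEq α] (h : M.IsCocircuit {b, c}) :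
    M.mapEquiv (Equiv.swap b c) = M :=
  dual_injective (by rw [← mapEquiv_dual, h.isCircuit.mapEquiv_swap_eq_self])

lemma IsCircuit.hasIsoMinor_delete_of_pair (h : M.IsCircuit {b, c})
    (hb : (M ＼ {b}).HasIsoMinor N) : (M ＼ {c}).HasIsoMinor N := by
  classical
  simpa [mapEquiv_delete, h.mapEquiv_swap_eq_self] using hb.mapEquiv (Equiv.swap b c)

lemma IsCocircuit.hasIsoMinor_contract_of_pair (h : M.IsCocircuit {b, c})
    (hb : (M ／ {b}).HasIsoMinor N) : (M ／ {c}).HasIsoMinor N := by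
  classical
  simpa [mapEquiv_contract, h.mapEquiv_swap_eq_self] using hb.mapEquiv (Equiv.swap b c)

end ParallelSwap

section Connectivity

variable {M M₀ : Matroid α} {N : Matroid β} {X : Set α} {k : ℕ}

lemma eRk'_eq_eRk (M : Matroid α) (X : Set α) : M.eRk' X = M.eRk X := by
  refine le_antisymm (iSup₂_le fun I hI => hI.1.encard_le_eRk_of_subset hI.2) ?_
  obtain ⟨I, hIX, hI, hIr⟩ := le_eRk_iff.1 (le_refl (M.eRk X))
  exact hIr ▸ le_iSup₂_of_le I ⟨hI, hIX⟩ le_rfl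

/-- By `r✶(X) + r(M) = r(E - X) + |X|`, the connectivity of `X` is `r(X) + r✶(X) - |X|`. -/
lemma connBddBy_of_eRk_add_eRk_dual_le (hXE : X ⊆ M.E) (hX : X.Finite)
    (h : M.eRk X + M✶.eRk X ≤ X.encard + k) : M.ConnBddBy X k := by
  rw [ConnBddBy, eRk'_eq_eRk, eRk'_eq_eRk, eRk'_eq_eRk, eRk_ground,
    ← ENat.add_le_add_iff_right hX.encard_lt_top.ne, add_assoc, ← M.eRk_dual_add_eRank X]
  calc M.eRk X + (M✶.eRk X + M.eRank) = (M.eRk X + M✶.eRk X) + M.eRank := by ring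
    _ ≤ (X.encard + k) + M.eRank := by gcongr
    _ = M.eRank + k + X.encard := by ring

lemma connBddBy_of_dep_or_dual_dep (hX : X.encard = k + 1) (h : M.Dep X ∨ M✶.Dep X) :
    M.ConnBddBy X k := by
  have hfin : X.Finite := Set.finite_of_encard_eq_coe (k := k + 1) (by simpa using hX)
  refine connBddBy_of_eRk_add_eRk_dual_le (h.elim Dep.subset_ground Dep.subset_ground) hfin ?_
  have hr := M.eRk_le_encard X
  have hr' := M✶.eRk_le_encard X
  have hlt : M.eRk X < X.encard ∨ M✶.eRk X < X.encard :=
    h.imp (M.eRk_lt_encard_of_dep_of_finite hfin) (M✶.eRk_lt_encard_of_dep_of_finite hfin)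
  rw [hX] at hr hr' hlt ⊢
  lift M.eRk X to ℕ using (hr.trans_lt (by simp)).ne with r
  lift M✶.eRk X to ℕ using (hr'.trans_lt (by simp)).ne with r'
  norm_cast at hr hr' hlt ⊢
  omega

lemma connBddBy_of_dep_of_dual_dep (hX : X.encard = k + 2) (hdep : M.Dep X)
    (hcodep : M✶.Dep X) : M.ConnBddBy X k := by
  have hfin : X.Finite := Set.finite_of_encard_eq_coe (k := k + 2) (by simpa using hX)
  refine connBddBy_of_eRk_add_eRk_dual_le hdep.subset_ground hfin ?_
  have hr := M.eRk_lt_encard_of_dep_of_finite hfin hdep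
  have hr' := M✶.eRk_lt_encard_of_dep_of_finite hfin hcodep
  rw [hX] at hr hr' ⊢
  lift M.eRk X to ℕ using hr.ne_top with r
  lift M✶.eRk X to ℕ using hr'.ne_top with r'
  norm_cast at hr hr' ⊢
  omega

lemma isKSep_compl (hXE : X ⊆ M.E) (hX : (k : ℕ∞) ≤ X.encard)
    (hXc : (k : ℕ∞) ≤ (M.E \ X).encard) (hconn : M.ConnBddBy X (k - 1)) :
    M.IsKSep k X (M.E \ X) :=
  ⟨Set.disjoint_sdiff_right, Set.union_sdiff_cancel hXE, hX, hXc, hconn⟩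

lemma ThreeConnected.three_le_encard (hM : M.ThreeConnected) (hE : 4 ≤ M.E.encard)
    (hX : M.Dep X ∨ M✶.Dep X) : 3 ≤ X.encard := by
  by_contra! hlt
  have hXE : X ⊆ M.E := hX.elim Dep.subset_ground Dep.subset_ground
  obtain ⟨Y, hXY, hYE, hY⟩ := Set.exists_superset_subset_encard_eq hXE (k := 2)
    (Order.le_of_lt_add_one hlt) (le_trans (by norm_num) hE)
  have hYc : 2 ≤ (M.E \ Y).encard := calc
    (2 : ℕ∞) = 4 - 2 := rfl
    _ ≤ M.E.encard - Y.encard := by rw [hY]; gcongr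
    _ ≤ (M.E \ Y).encard := Set.tsub_encard_le_encard_sdiff _ _
  have hconn : M.ConnBddBy Y 1 := connBddBy_of_dep_or_dual_dep (by rw [hY]; norm_num) <|
    hX.imp (fun h => h.superset hXY) (fun h => h.superset hXY hYE)
  exact hM 2 (by norm_num) (by norm_num) Y (M.E \ Y)
    (isKSep_compl hYE (by rw [hY]; norm_num) (by exact_mod_cast hYc) hconn)

lemma InternallyFourConnected.not_dep_and_dual_dep (hM : M.InternallyFourConnected)
    (hE : 8 ≤ M.E.encard) (hX : X.encard = 4) : ¬ (M.Dep X ∧ M✶.Dep X) := by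
  rintro ⟨hdep, hcodep⟩
  have hXc : 4 ≤ (M.E \ X).encard := calc
    (4 : ℕ∞) = 8 - 4 := rfl
    _ ≤ M.E.encard - X.encard := by rw [hX]; gcongr
    _ ≤ (M.E \ X).encard := Set.tsub_encard_le_encard_sdiff _ _
  have hconn : M.ConnBddBy X 2 :=
    connBddBy_of_dep_of_dual_dep (by rw [hX]; norm_num) hdep hcodep
  obtain h | h := hM.2 X (M.E \ X) (isKSep_compl hdep.subset_ground (by rw [hX]; norm_num)
    (le_trans (by norm_num) hXc) hconn)
  · rw [hX] at h
    norm_num at h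
  · exact absurd (hXc.trans h) (by norm_num)

lemma IsIsoTo.three_le_encard (h : M₀.IsIsoTo N) (hN : N.ThreeConnected) (hNE : 4 ≤ N.E.encard)
    (hX : M₀.Dep X ∨ M₀✶.Dep X) : 3 ≤ X.encard := by
  obtain ⟨f, hf, rfl⟩ := h.exists_eq_map (Set.encard_pos.1 (lt_of_lt_of_le (by norm_num) hNE))
  have hXE : X ⊆ M₀.E := hX.elim Dep.subset_ground Dep.subset_ground
  rw [← (hf.mono hXE).encard_image]
  refine hN.three_le_encard hNE (hX.imp (fun h => map_dep_iff.2 ⟨X, h, rfl⟩) fun h => ?_)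
  rw [map_dual]
  exact map_dep_iff.2 ⟨X, h, rfl⟩

lemma IsIsoTo.not_dep_and_dual_dep (h : M₀.IsIsoTo N) (hN : N.InternallyFourConnected)
    (hNE : 8 ≤ N.E.encard) (hX : X.encard = 4) : ¬ (M₀.Dep X ∧ M₀✶.Dep X) := by
  rintro ⟨hdep, hcodep⟩
  obtain ⟨f, hf, rfl⟩ := h.exists_eq_map (Set.encard_pos.1 (lt_of_lt_of_le (by norm_num) hNE))
  refine hN.not_dep_and_dual_dep hNE (X := f '' X) ?_ ⟨map_dep_iff.2 ⟨X, hdep, rfl⟩, ?_⟩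
  · rwa [(hf.mono hdep.subset_ground).encard_image]
  · rw [map_dual]
    exact map_dep_iff.2 ⟨X, hcodep, rfl⟩

end Connectivity

section SmallCircuits

variable {M M₀ : Matroid α} {N : Matroid β} {P T : Set α} {x y : α}

/-- Write `M₀ = M ／ C ＼ D`. If `P` meets `D` we are done; if `P ⊆ C`, every element of `P` is
spanned by the rest of `C`; otherwise `P \ C` is dependent in `M₀`. -/
lemma IsCircuit.exists_isMinor_delete (hP : M.IsCircuit P) (hM₀ : M₀ ≤m M)
    (hP₀ : ∀ X ⊆ P, ¬ M₀.Dep X) : ∃ y ∈ P, M₀ ≤m M ＼ {y} := by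
  obtain ⟨C, D, -, -, hCD, rfl⟩ := hM₀.exists_eq_contract_delete_disjoint
  by_cases hPD : (P ∩ D).Nonempty
  · obtain ⟨y, hyP, hyD⟩ := hPD
    exact ⟨y, hyP, contract_delete_isMinor_delete hCD (Set.singleton_subset_iff.2 hyD)⟩
  by_cases hPC : P ⊆ C
  · obtain ⟨y, hy⟩ := hP.nonempty
    refine ⟨y, hy, contract_delete_isMinor_delete_of_mem_closure (hPC hy) ?_⟩
    exact M.closure_subset_closure (Set.sdiff_subset_sdiff_left hPC)
      (hP.mem_closure_sdiff_singleton_of_mem hy)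
  refine absurd (delete_dep_iff.2 ⟨hP.contract_dep_of_not_subset hPC, ?_⟩)
    (hP₀ (P \ C) Set.sdiff_subset)
  exact Set.disjoint_left.2 fun z hz hzD => hPD ⟨z, hz.1, hzD⟩

lemma IsCocircuit.exists_isMinor_contract (hP : M.IsCocircuit P) (hM₀ : M₀ ≤m M)
    (hP₀ : ∀ X ⊆ P, ¬ M₀✶.Dep X) : ∃ y ∈ P, M₀ ≤m M ／ {y} := by
  obtain ⟨y, hy, h⟩ := hP.isCircuit.exists_isMinor_delete hM₀.dual hP₀
  exact ⟨y, hy, by simpa [dual_delete] using h.dual⟩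

lemma IsCircuit.hasIsoMinor_delete (hN : N.ThreeConnected) (hNE : 4 ≤ N.E.encard)
    (hP : M.IsCircuit P) (hP2 : P.encard = 2) (hy : y ∈ P) (h : M.HasIsoMinor N) :
    (M ＼ {y}).HasIsoMinor N := by
  obtain ⟨M₀, hM₀, hiso⟩ := hasIsoMinor_iff.1 h
  obtain ⟨z, hz, hM₀z⟩ := hP.exists_isMinor_delete hM₀ fun X hXP hX =>
    (hiso.three_le_encard hN hNE (.inl hX)).not_gt
      ((Set.encard_le_encard hXP).trans_lt (by rw [hP2]; norm_num))
  obtain rfl | hzy := eq_or_ne z y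
  · exact hiso.hasIsoMinor.of_isMinor hM₀z
  exact (Set.eq_pair_of_encard_eq_two hP2 hz hy hzy ▸ hP).hasIsoMinor_delete_of_pair
    (hiso.hasIsoMinor.of_isMinor hM₀z)

lemma IsCocircuit.hasIsoMinor_contract (hN : N.ThreeConnected) (hNE : 4 ≤ N.E.encard)
    (hP : M.IsCocircuit P) (hP2 : P.encard = 2) (hy : y ∈ P) (h : M.HasIsoMinor N) :
    (M ／ {y}).HasIsoMinor N := by
  obtain ⟨M₀, hM₀, hiso⟩ := hasIsoMinor_iff.1 h
  obtain ⟨z, hz, hM₀z⟩ := hP.exists_isMinor_contract hM₀ fun X hXP hX =>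
    (hiso.three_le_encard hN hNE (.inr hX)).not_gt
      ((Set.encard_le_encard hXP).trans_lt (by rw [hP2]; norm_num))
  obtain rfl | hzy := eq_or_ne z y
  · exact hiso.hasIsoMinor.of_isMinor hM₀z
  exact (Set.eq_pair_of_encard_eq_two hP2 hz hy hzy ▸ hP).hasIsoMinor_contract_of_pair
    (hiso.hasIsoMinor.of_isMinor hM₀z)

lemma IsCircuit.hasIsoMinor_contract_delete (hN : N.ThreeConnected) (hNE : 4 ≤ N.E.encard)
    (hT : M.IsCircuit T) (hT3 : T.encard = 3) (hx : x ∈ T) (hy : y ∈ T) (hxy : x ≠ y)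
    (h : (M ／ {x}).HasIsoMinor N) : (M ／ {x} ＼ {y}).HasIsoMinor N :=
  (hT.contractElem_isCircuit (Set.one_lt_encard_iff_nontrivial.1 (by rw [hT3]; norm_num)) hx
    ).hasIsoMinor_delete hN hNE (Set.encard_sdiff_singleton_eq_two hT3 hx) ⟨hy, hxy.symm⟩ h

lemma IsCocircuit.hasIsoMinor_delete_contract (hN : N.ThreeConnected) (hNE : 4 ≤ N.E.encard)
    (hT : M.IsCocircuit T) (hT3 : T.encard = 3) (hx : x ∈ T) (hy : y ∈ T) (hxy : x ≠ y)
    (h : (M ＼ {x}).HasIsoMinor N) : (M ＼ {x} ／ {y}).HasIsoMinor N := by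
  have hTx : (M ＼ {x}).IsCocircuit (T \ {x}) := by
    rw [isCocircuit_def, dual_delete]
    exact hT.isCircuit.contractElem_isCircuit
      (Set.one_lt_encard_iff_nontrivial.1 (by rw [hT3]; norm_num)) hx
  exact hTx.hasIsoMinor_contract hN hNE (Set.encard_sdiff_singleton_eq_two hT3 hx)
    ⟨hy, hxy.symm⟩ h

lemma IsCircuit.hasIsoMinor_delete_of_contract (hN : N.ThreeConnected) (hNE : 4 ≤ N.E.encard)
    (hT : M.IsCircuit T) (hT3 : T.encard = 3) (hx : x ∈ T) (hy : y ∈ T) (hxy : x ≠ y)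
    (h : (M ／ {x}).HasIsoMinor N) : (M ＼ {y}).HasIsoMinor N :=
  (hT.hasIsoMinor_contract_delete hN hNE hT3 hx hy hxy h).of_isMinor
    (contract_delete_isMinor_delete (Set.disjoint_singleton.2 hxy) subset_rfl)

lemma IsCocircuit.hasIsoMinor_contract_of_delete (hN : N.ThreeConnected) (hNE : 4 ≤ N.E.encard)
    (hT : M.IsCocircuit T) (hT3 : T.encard = 3) (hx : x ∈ T) (hy : y ∈ T) (hxy : x ≠ y)
    (h : (M ＼ {x}).HasIsoMinor N) : (M ／ {y}).HasIsoMinor N := by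
  have h' := hT.hasIsoMinor_delete_contract hN hNE hT3 hx hy hxy h
  rw [← contract_delete_comm _ (Set.disjoint_singleton.2 hxy.symm)] at h'
  exact h'.of_isMinor (delete_isMinor _ _)

end SmallCircuits

section Fans

variable {M M₀ : Matroid α} {N : Matroid β} {a b c d e : α}

lemma Is4FanOrdering.pairwise_ne (h : M.Is4FanOrdering a b c d) :
    a ≠ b ∧ a ≠ c ∧ a ≠ d ∧ b ≠ c ∧ b ≠ d ∧ c ≠ d := by
  classical
  simpa [and_assoc] using
    (List.encard_toFinset_eq_length_iff (l := [a, b, c, d])).1 (by simpa using h.1)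

lemma Is5FanOrdering.pairwise_ne (h : M.Is5FanOrdering a b c d e) :
    a ≠ b ∧ a ≠ c ∧ a ≠ d ∧ a ≠ e ∧ b ≠ c ∧ b ≠ d ∧ b ≠ e ∧ c ≠ d ∧ c ≠ e ∧ d ≠ e := by
  classical
  simpa [and_assoc] using
    (List.encard_toFinset_eq_length_iff (l := [a, b, c, d, e])).1 (by simpa using h.1)

lemma Is5FanOrdering.is4FanOrdering (h : M.Is5FanOrdering a b c d e) :
    M.Is4FanOrdering a b c d := by
  classical
  obtain ⟨hab, hac, had, -, hbc, hbd, -, hcd, -, -⟩ := h.pairwise_ne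
  refine ⟨?_, h.2.1, h.2.2.1⟩
  simpa using (List.encard_toFinset_eq_length_iff (l := [a, b, c, d])).2 (by simp [*])

lemma Is5FanOrdering.is4FanOrdering_reverse (h : M.Is5FanOrdering a b c d e) :
    M.Is4FanOrdering e d c b := by
  classical
  obtain ⟨-, -, -, -, hbc, hbd, hbe, hcd, hce, hde⟩ := h.pairwise_ne
  refine ⟨?_, ?_, ?_⟩
  · simpa using (List.encard_toFinset_eq_length_iff (l := [e, d, c, b])).2
      (by simp [hbc.symm, hbd.symm, hbe.symm, hcd.symm, hce.symm, hde.symm])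
  · rw [show ({e, d, c} : Set α) = {c, d, e} by ext; simp; tauto]
    exact h.2.2.2
  · rw [show ({d, c, b} : Set α) = {b, c, d} by ext; simp; tauto]
    exact h.2.2.1

lemma Is4FanOrdering.not_subset_ground (hfan : M.Is4FanOrdering a b c d) (hiso : M₀.IsIsoTo N)
    (hM₀ : M₀ ≤m M) (hN : N.InternallyFourConnected) (hNE : 8 ≤ N.E.encard) :
    ¬ {a, b, c, d} ⊆ M₀.E := fun hE =>
  hiso.not_dep_and_dual_dep hN hNE hfan.1
    ⟨(hfan.2.1.isCircuit.dep.superset (by simp [Set.insert_subset_iff])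
      (hE.trans hM₀.subset)).of_isMinor hE hM₀,
    (hfan.2.2.isCocircuit.isCircuit.dep.superset (Set.subset_insert _ _)
      (hE.trans hM₀.subset)).of_isMinor hE hM₀.dual⟩

theorem Is4FanOrdering.hasIsoMinor_delete_or_contract (hN : N.InternallyFourConnected)
    (hNE : 8 ≤ N.E.encard) (hfan : M.Is4FanOrdering a b c d) (h : M.HasIsoMinor N) :
    (M ＼ {a}).HasIsoMinor N ∨ (M ／ {d}).HasIsoMinor N := by
  obtain ⟨hab, hac, -, -, hbd, hcd⟩ := hfan.pairwise_ne
  have hN4 : 4 ≤ N.E.encard := le_trans (by norm_num) hNE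
  have hdel {x y} (hx : x ∈ ({a, b, c} : Set α)) (hy : y ∈ ({a, b, c} : Set α)) (hxy : x ≠ y) :=
    hfan.2.1.isCircuit.hasIsoMinor_delete_of_contract hN.1 hN4 hfan.2.1.2 hx hy hxy
  have hcon {x y} (hx : x ∈ ({b, c, d} : Set α)) (hy : y ∈ ({b, c, d} : Set α)) (hxy : x ≠ y) :=
    hfan.2.2.isCocircuit.hasIsoMinor_contract_of_delete hN.1 hN4 hfan.2.2.2 hx hy hxy
  obtain ⟨haE, hbE, hcE⟩ : a ∈ M.E ∧ b ∈ M.E ∧ c ∈ M.E := by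
    simpa [Set.insert_subset_iff] using hfan.2.1.isCircuit.subset_ground
  have hdE : d ∈ M.E := hfan.2.2.isCocircuit.subset_ground (by simp)
  obtain ⟨M₀, hM₀, hiso⟩ := hasIsoMinor_iff.1 h
  obtain ⟨C, D, -, -, hCD, rfl⟩ := hM₀.exists_eq_contract_delete_disjoint
  obtain ha | ha | ha := mem_or_mem_or_mem_contract_delete_ground C D haE
  · exact .inr (hcon (by simp) (by simp) hbd
      (hdel (by simp) (by simp) hab (hiso.hasIsoMinor_contract_of_mem ha)))
  · exact .inl (hiso.hasIsoMinor_delete_of_mem hCD ha)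
  obtain hb | hb | hb := mem_or_mem_or_mem_contract_delete_ground C D hbE
  · exact .inl (hdel (by simp) (by simp) hab.symm (hiso.hasIsoMinor_contract_of_mem hb))
  · exact .inr (hcon (by simp) (by simp) hbd (hiso.hasIsoMinor_delete_of_mem hCD hb))
  obtain hc | hc | hc := mem_or_mem_or_mem_contract_delete_ground C D hcE
  · exact .inl (hdel (by simp) (by simp) hac.symm (hiso.hasIsoMinor_contract_of_mem hc))
  · exact .inr (hcon (by simp) (by simp) hcd (hiso.hasIsoMinor_delete_of_mem hCD hc))
  obtain hd | hd | hd := mem_or_mem_or_mem_contract_delete_ground C D hdE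
  · exact .inr (hiso.hasIsoMinor_contract_of_mem hd)
  · exact .inl (hdel (by simp) (by simp) hab.symm
      (hcon (by simp) (by simp) hbd.symm (hiso.hasIsoMinor_delete_of_mem hCD hd)))
  exact absurd (Set.insert_subset ha (Set.insert_subset hb (Set.insert_subset hc
    (Set.singleton_subset_iff.2 hd)))) (hfan.not_subset_ground hiso hM₀ hN hNE)

lemma Is5FanOrdering.hasIsoMinor_of_delete_center (hN : N.ThreeConnected)
    (hNE : 4 ≤ N.E.encard) (hfan : M.Is5FanOrdering a b c d e) (h : (M ＼ {c}).HasIsoMinor N) :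
    (M ＼ {a} ／ {b}).HasIsoMinor N ∧ (M ／ {d} ＼ {e}).HasIsoMinor N := by
  obtain ⟨hab, -, -, -, hbc, -, -, hcd, -, hde⟩ := hfan.pairwise_ne
  obtain ⟨-, hT₁, hT', hT₂⟩ := hfan
  have hb := hT'.isCocircuit.hasIsoMinor_contract_of_delete hN hNE hT'.2 (by simp) (by simp)
    hbc.symm h
  have hd := hT'.isCocircuit.hasIsoMinor_contract_of_delete hN hNE hT'.2 (by simp) (by simp)
    hcd h
  refine ⟨?_, hT₂.isCircuit.hasIsoMinor_contract_delete hN hNE hT₂.2 (by simp) (by simp) hde hd⟩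
  rw [← contract_delete_comm _ (Set.disjoint_singleton.2 hab.symm)]
  exact hT₁.isCircuit.hasIsoMinor_contract_delete hN hNE hT₁.2 (by simp) (by simp) hab.symm hb

/-- In `M ／ c`, both `{a, b}` and `{d, e}` are parallel pairs. -/
lemma Is5FanOrdering.hasIsoMinor_of_contract_center (hN : N.ThreeConnected)
    (hNE : 4 ≤ N.E.encard) (hfan : M.Is5FanOrdering a b c d e) (h : (M ／ {c}).HasIsoMinor N) :
    (M ＼ {a} ＼ {e}).HasIsoMinor N := by
  obtain ⟨-, hac, had, hae, -, -, -, -, hce, -⟩ := hfan.pairwise_ne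
  obtain ⟨-, hT₁, -, hT₂⟩ := hfan
  have ha := hT₁.isCircuit.hasIsoMinor_contract_delete hN hNE hT₁.2 (by simp) (by simp) hac.symm h
  have hde : (M ／ {c} ＼ {a}).IsCircuit ({c, d, e} \ {c}) := by
    refine (circuit_iff_delete_of_disjoint ?_).1 (hT₂.isCircuit.contractElem_isCircuit
      (Set.one_lt_encard_iff_nontrivial.1 (by rw [hT₂.2]; norm_num)) (by simp))
    simp [had, hae]
  have he := hde.hasIsoMinor_delete (y := e) hN hNE
    (Set.encard_sdiff_singleton_eq_two hT₂.2 (by simp)) (by simp [hce.symm]) ha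
  rw [delete_delete] at he ⊢
  exact he.of_isMinor (contract_delete_isMinor_delete (by simp [hac.symm, hce]) subset_rfl)

lemma Is5FanOrdering.hasIsoMinor_center_of_contract (hN : N.ThreeConnected)
    (hNE : 4 ≤ N.E.encard) (hfan : M.Is5FanOrdering a b c d e) {x : α}
    (hx : x ∈ ({a, b, c, d, e} : Set α)) (h : (M ／ {x}).HasIsoMinor N) :
    (M ＼ {c}).HasIsoMinor N ∨ (M ／ {c}).HasIsoMinor N := by
  obtain ⟨-, hac, -, -, hbc, -, -, hcd, hce, -⟩ := hfan.pairwise_ne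
  obtain ⟨-, hT₁, -, hT₂⟩ := hfan
  have hdel₁ {y} (hy : y ∈ ({a, b, c} : Set α)) (hyc : y ≠ c) :=
    hT₁.isCircuit.hasIsoMinor_delete_of_contract hN hNE hT₁.2 hy (by simp) hyc
  have hdel₂ {y} (hy : y ∈ ({c, d, e} : Set α)) (hyc : y ≠ c) :=
    hT₂.isCircuit.hasIsoMinor_delete_of_contract hN hNE hT₂.2 hy (by simp) hyc
  obtain rfl | rfl | rfl | rfl | rfl := hx
  · exact .inl (hdel₁ (by simp) hac h)
  · exact .inl (hdel₁ (by simp) hbc h)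
  · exact .inr h
  · exact .inl (hdel₂ (by simp) hcd.symm h)
  · exact .inl (hdel₂ (by simp) hce.symm h)

lemma Is5FanOrdering.hasIsoMinor_center_of_delete (hN : N.ThreeConnected)
    (hNE : 4 ≤ N.E.encard) (hfan : M.Is5FanOrdering a b c d e) {x : α}
    (hx : x ∈ ({b, c, d} : Set α)) (h : (M ＼ {x}).HasIsoMinor N) :
    (M ＼ {c}).HasIsoMinor N ∨ (M ／ {c}).HasIsoMinor N := by
  obtain ⟨-, -, -, -, hbc, -, -, hcd, -, -⟩ := hfan.pairwise_ne
  have hcon {y} (hy : y ∈ ({b, c, d} : Set α)) (hyc : y ≠ c) :=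
    hfan.2.2.1.isCocircuit.hasIsoMinor_contract_of_delete hN hNE hfan.2.2.1.2 hy (by simp) hyc
  obtain rfl | rfl | rfl := hx
  · exact .inr (hcon (by simp) hbc h)
  · exact .inl h
  · exact .inr (hcon (by simp) hcd.symm h)

/-- Contracting any element of the fan, or deleting an interior one, leads to `M ＼ c` or
`M ／ c`; otherwise, unless both ends are deleted, one of the 4-fans `(a, b, c, d)` and
`(e, d, c, b)` survives in the minor. -/
lemma Is5FanOrdering.hasIsoMinor_delete_delete_or_center (hN : N.InternallyFourConnected)
    (hNE : 8 ≤ N.E.encard) (hfan : M.Is5FanOrdering a b c d e) (h : M.HasIsoMinor N) :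
    (M ＼ {a} ＼ {e}).HasIsoMinor N ∨ (M ＼ {c}).HasIsoMinor N ∨ (M ／ {c}).HasIsoMinor N := by
  have hN4 : 4 ≤ N.E.encard := le_trans (by norm_num) hNE
  obtain ⟨M₀, hM₀, hiso⟩ := hasIsoMinor_iff.1 h
  obtain ⟨C, D, -, -, hCD, rfl⟩ := hM₀.exists_eq_contract_delete_disjoint
  by_cases hC : ∃ x ∈ ({a, b, c, d, e} : Set α), x ∈ C
  · obtain ⟨x, hx, hxC⟩ := hC
    exact .inr (hfan.hasIsoMinor_center_of_contract hN.1 hN4 hx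
      (hiso.hasIsoMinor_contract_of_mem hxC))
  by_cases hD : ∃ x ∈ ({b, c, d} : Set α), x ∈ D
  · obtain ⟨x, hx, hxD⟩ := hD
    exact .inr (hfan.hasIsoMinor_center_of_delete hN.1 hN4 hx
      (hiso.hasIsoMinor_delete_of_mem hCD hxD))
  simp only [not_exists, not_and] at hC hD
  have hE : ({a, b, c, d, e} : Set α) ⊆ M.E := fun x hx =>
    Set.union_subset hfan.2.1.isCircuit.subset_ground hfan.2.2.2.isCircuit.subset_ground
      (by simp at hx ⊢; tauto)
  have hM₀E {x} (hx : x ∈ ({a, b, c, d, e} : Set α)) (hxD : x ∉ D) : x ∈ (M ／ C ＼ D).E :=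
    ⟨⟨hE hx, hC x hx⟩, hxD⟩
  have hbcd : ({b, c, d} : Set α) ⊆ (M ／ C ＼ D).E := fun x hx =>
    hM₀E (by rcases hx with rfl | rfl | rfl <;> simp) (hD x hx)
  by_cases haD : a ∈ D
  · by_cases heD : e ∈ D
    · refine .inl (hiso.hasIsoMinor.of_isMinor ?_)
      rw [delete_delete]
      exact contract_delete_isMinor_delete hCD
        (Set.union_subset (Set.singleton_subset_iff.2 haD) (Set.singleton_subset_iff.2 heD))
    refine absurd (Set.insert_subset (hM₀E (by simp) heD) ?_)
      (hfan.is4FanOrdering_reverse.not_subset_ground hiso hM₀ hN hNE)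
    exact fun x hx => hbcd (by simp at hx ⊢; tauto)
  refine absurd (Set.insert_subset (hM₀E (by simp) haD) ?_)
    (hfan.is4FanOrdering.not_subset_ground hiso hM₀ hN hNE)
  exact fun x hx => hbcd (by simp at hx ⊢; tauto)

theorem Is5FanOrdering.hasIsoMinor (hN : N.InternallyFourConnected) (hNE : 8 ≤ N.E.encard)
    (hfan : M.Is5FanOrdering a b c d e) (h : M.HasIsoMinor N) :
    (M ＼ {a} ＼ {e}).HasIsoMinor N ∨
      ((M ＼ {a} ／ {b}).HasIsoMinor N ∧ (M ／ {d} ＼ {e}).HasIsoMinor N) := by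
  have hN4 : 4 ≤ N.E.encard := le_trans (by norm_num) hNE
  obtain h | h | h := hfan.hasIsoMinor_delete_delete_or_center hN hNE h
  · exact .inl h
  · exact .inr (hfan.hasIsoMinor_of_delete_center hN.1 hN4 h)
  · exact .inl (hfan.hasIsoMinor_of_contract_center hN.1 hN4 h)

end Fans

end Matroid

open Matroid

theorem statement_3_general {α : Type u} {β : Type v} (M : Matroid α) (N : Matroid β)
    (hNi4 : N.InternallyFourConnected)
    (hNcard : (8 : ℕ∞) ≤ N.E.encard)
    (hminor : M.HasIsoMinor N) :
    (∀ s₁ s₂ s₃ s₄ : α, M.Is4FanOrdering s₁ s₂ s₃ s₄ →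
        (M.Del {s₁}).HasIsoMinor N ∨ (M.Con {s₄}).HasIsoMinor N) ∧
    (∀ s₁ s₂ s₃ s₄ s₅ : α, M.Is5FanOrdering s₁ s₂ s₃ s₄ s₅ →
        (((M.Del {s₁}).Del {s₅}).HasIsoMinor N ∨
          (((M.Del {s₁}).Con {s₂}).HasIsoMinor N ∧
            ((M.Con {s₄}).Del {s₅}).HasIsoMinor N)) ∧
        (M.Del {s₁}).HasIsoMinor N ∧ (M.Del {s₅}).HasIsoMinor N) := by
  simp only [del_eq_delete, con_eq_contract]
  refine ⟨fun _ _ _ _ hfan => hfan.hasIsoMinor_delete_or_contract hNi4 hNcard hminor,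
    fun s₁ s₂ s₃ s₄ s₅ hfan => ?_⟩
  obtain ⟨-, -, -, -, -, -, -, -, -, h₄₅⟩ := hfan.pairwise_ne
  have h := hfan.hasIsoMinor hNi4 hNcard hminor
  refine ⟨h, ?_, ?_⟩
  · obtain h | ⟨h, -⟩ := h
    · exact h.of_isMinor (delete_isMinor _ _)
    · exact h.of_isMinor (contract_isMinor _ _)
  · obtain h | ⟨-, h⟩ := h
    · exact h.of_isMinor (delete_comm M {s₁} {s₅} ▸ delete_isMinor _ _)
    · exact h.of_isMinor (contract_delete_isMinor_delete (Set.disjoint_singleton.2 h₄₅) subset_rfl)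

/-- minors of 4-fans and 5-fans. -/
theorem statement_3 {α : Type u} {β : Type v} (M : Matroid α) (N : Matroid β)
    (hMbin : M.IsBinary) (hNi4 : N.InternallyFourConnected)
    (hNcard : (8 : ℕ∞) ≤ N.E.encard)
    (hminor : M.HasIsoMinor N) :
    (∀ s₁ s₂ s₃ s₄ : α, M.Is4FanOrdering s₁ s₂ s₃ s₄ →
        (M.Del {s₁}).HasIsoMinor N ∨ (M.Con {s₄}).HasIsoMinor N) ∧
    (∀ s₁ s₂ s₃ s₄ s₅ : α, M.Is5FanOrdering s₁ s₂ s₃ s₄ s₅ →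
        (((M.Del {s₁}).Del {s₅}).HasIsoMinor N ∨
          (((M.Del {s₁}).Con {s₂}).HasIsoMinor N ∧
            ((M.Con {s₄}).Del {s₅}).HasIsoMinor N)) ∧
        (M.Del {s₁}).HasIsoMinor N ∧ (M.Del {s₅}).HasIsoMinor N) :=
  statement_3_general M N hNi4 hNcard hminor
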